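/- For every w ∈ S_n and every i with 1 ≤ i ≤ n−1: δ_i p_w = p_{s_i w} if ℓ(s_i w) < ℓ(w) and δ_i p_w = 0 otherwise; and ∂_i p_w = p_{w s_i} if ℓ(w s_i) < ℓ(w) and ∂_i p_w = 0 otherwise. -/

import Mathlib

open MvPolynomial Equiv Finset

noncomputable section

/-- The polynomial ring ℂ[t₁,…,tₙ]. -/
abbrev Pol (n : ℕ) : Type := MvPolynomial (Fin n) ℂ

/-- The action of a permutation `w` on polynomials by the substitution `tᵢ ↦ t_{w(i)}`. -/
def pact {n : ℕ} (w : Perm (Fin n)) (f : Pol n) : Pol n := rename ⇑w f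

/-- The GKM condition defining `R ⊆ ∏_{v ∈ Sₙ} ℂ[t₁,…,tₙ]`: for every `v` and every
transposition `(i j)` with `i < j`, the difference `p(v) − p((i j)v)` is divisible by
`tᵢ − tⱼ`. -/
def GKM (n : ℕ) (p : Perm (Fin n) → Pol n) : Prop :=
  ∀ (v : Perm (Fin n)) (i j : Fin n), i < j →
    (X i - X j : Pol n) ∣ (p v - p (Equiv.swap i j * v))

/-- The length of a permutation: its number of inversions. -/
def len {n : ℕ} (w : Perm (Fin n)) : ℕ :=
  (Finset.univ.filter fun q : Fin n × Fin n => q.1 < q.2 ∧ w q.2 < w q.1).card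

/-- Bruhat order: the partial order generated by `u < (i j) u` whenever `ℓ(u) < ℓ((i j)u)`. -/
def bruhatLE {n : ℕ} : Perm (Fin n) → Perm (Fin n) → Prop :=
  Relation.ReflTransGen
    (fun u v => (∃ i j : Fin n, i < j ∧ v = Equiv.swap i j * u) ∧ len u < len v)

/-- `p` is the canonical class (equivariant Schubert class) of `w`:
(i) each component is homogeneous of degree `ℓ(w)`; (ii) `p(v) = 0` unless `v ≥ w` in
Bruhat order; (iii) `p(w) = ∏ (tᵢ − tⱼ)` over pairs `i < j` with `ℓ((i j)w) < ℓ(w)`;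
and `p` satisfies the GKM conditions. -/
def IsCanonical {n : ℕ} (w : Perm (Fin n)) (p : Perm (Fin n) → Pol n) : Prop :=
  GKM n p ∧
  (∀ v, (p v).IsHomogeneous (len w)) ∧
  (∀ v, ¬ bruhatLE w v → p v = 0) ∧
  p w = ∏ q ∈ Finset.univ.filter
      (fun q : Fin n × Fin n => q.1 < q.2 ∧ len (Equiv.swap q.1 q.2 * w) < len w),
      (X q.1 - X q.2 : Pol n)

/-- The simple transposition `sᵢ = (i, i+1)`. -/
def sT (n i : ℕ) (h : i + 1 < n) : Perm (Fin n) :=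
  Equiv.swap ⟨i, Nat.lt_of_succ_lt h⟩ ⟨i + 1, h⟩

/-- The dot (left) action: `(w·p)(v) = w(p(w⁻¹ v))`. -/
def dot {n : ℕ} (w : Perm (Fin n)) (p : Perm (Fin n) → Pol n) : Perm (Fin n) → Pol n :=
  fun v => pact w (p (w⁻¹ * v))

/-- The star (right) action: `(p * w)(v) = p(vw)`. -/
def starAct {n : ℕ} (p : Perm (Fin n) → Pol n) (w : Perm (Fin n)) :
    Perm (Fin n) → Pol n :=
  fun v => p (v * w)

/-- `R` as a `ℂ[t₁,…,tₙ]`-submodule of the product. -/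
def gkmSubmodule (n : ℕ) : Submodule (Pol n) (Perm (Fin n) → Pol n) where
  carrier := {p | GKM n p}
  add_mem' := by
    intro a b ha hb v i j hij
    have h := dvd_add (ha v i j hij) (hb v i j hij)
    simpa [Pi.add_apply, add_sub_add_comm] using h
  zero_mem' := by
    intro v i j hij
    simp
  smul_mem' := by
    intro c p hp v i j hij
    have h := (hp v i j hij).mul_left c
    simpa [Pi.smul_apply, smul_eq_mul, mul_sub] using h

/-- The maximal ideal `𝔪 = (t₁,…,tₙ) ⊆ ℂ[t₁,…,tₙ]`. -/
def mIdeal (n : ℕ) : Ideal (Pol n) := Ideal.span (Set.range (X : Fin n → Pol n))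

/-- The submodule `𝔪R`: finite sums of products `c • p` with `c ∈ 𝔪` and `p ∈ R`. -/
def mR (n : ℕ) : Submodule (Pol n) (Perm (Fin n) → Pol n) :=
  Submodule.span (Pol n) {q | ∃ c ∈ mIdeal n, ∃ p, GKM n p ∧ q = c • p}

/-!
Write `D` for `δᵢ p_w` or `∂ᵢ p_w`. It is again a GKM class, its components have degree
`< ℓ(w)`, and the defining equation shows that on permutations of length `< ℓ(w)` it vanishes,
except at `sᵢw` (resp. `wsᵢ`) when that permutation is shorter than `w`; there, since `p_w(w)` is
the product of `tₐ − t_b` over the inversions `(a, b)` of `w⁻¹`, it takes the value of `p_{sᵢw}`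
(resp. `p_{wsᵢ}`). Finally, a GKM class of degree `< d` vanishing on all permutations of length
`< d` is zero: at `v` with `ℓ(v) ≥ d` it is, inductively, divisible by the `ℓ(v)` pairwise
coprime factors `tₐ − t_b` with `ℓ((a b)v) < ℓ(v)`. So `D` equals `p_{sᵢw}` (resp. `p_{wsᵢ}`)
or `0`.
-/

section Inversions

variable {n : ℕ}

def invSet (u : Perm (Fin n)) : Finset (Fin n × Fin n) :=
  univ.filter fun q => q.1 < q.2 ∧ u q.2 < u q.1

theorem len_eq_card_invSet (u : Perm (Fin n)) : len u = #(invSet u) := rfl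

@[simp]
theorem mem_invSet {u : Perm (Fin n)} {q : Fin n × Fin n} :
    q ∈ invSet u ↔ q.1 < q.2 ∧ u q.2 < u q.1 := by
  simp [invSet]

theorem len_inv (u : Perm (Fin n)) : len u⁻¹ = len u := by
  refine card_nbij' (fun q => (u⁻¹ q.2, u⁻¹ q.1)) (fun q => (u q.2, u q.1)) ?_ ?_ ?_ ?_ <;>
    intro q hq <;> simp_all

theorem len_swap_mul (a b : Fin n) (u : Perm (Fin n)) :
    len (swap a b * u) = len (u⁻¹ * swap a b) := by
  rw [← len_inv, mul_inv_rev, swap_inv]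

theorem swap_lt_swap_iff {i j : Fin n} (hij : (j : ℕ) = i + 1) {q : Fin n × Fin n}
    (hq : q ≠ (i, j)) (hq' : q ≠ (j, i)) : swap i j q.1 < swap i j q.2 ↔ q.1 < q.2 := by
  obtain ⟨x, y⟩ := q
  simp only [ne_eq, Prod.mk.injEq, not_and] at hq hq'
  simp only [swap_apply_def, Fin.lt_def, Fin.ext_iff] at *
  split_ifs <;> omega

theorem invSet_mul_swap {i j : Fin n} (hij : (j : ℕ) = i + 1) {u : Perm (Fin n)}
    (hu : u j < u i) :
    invSet (u * swap i j) = ((invSet u).erase (i, j)).map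
      ((swap i j).prodCongr (swap i j)).toEmbedding := by
  have hji : ¬ j < i := by rw [Fin.lt_def]; omega
  ext q
  rw [mem_map_equiv]
  by_cases hq : q = (i, j)
  · subst hq
    simp [lt_asymm hu]
  by_cases hq' : q = (j, i)
  · subst hq'
    simp [hji]
  have hsq : Prod.map (swap i j) (swap i j) q ≠ (i, j) := by
    obtain ⟨x, y⟩ := q
    simpa [swap_apply_eq_iff] using hq'
  simp [hsq, swap_lt_swap_iff hij hq hq']

theorem invSet_swap_mul {i j : Fin n} (hij : (j : ℕ) = i + 1) {u : Perm (Fin n)} {p q : Fin n}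
    (hp : u p = j) (hq : u q = i) (hpq : p < q) :
    invSet (swap i j * u) = (invSet u).erase (p, q) := by
  have hji : ¬ j < i := by rw [Fin.lt_def]; omega
  ext x
  rw [mem_erase, mem_invSet, mem_invSet]
  by_cases hx : x = (p, q)
  · subst hx
    simp [hp, hq, hji]
  by_cases hx' : x = (q, p)
  · subst hx'
    simp [lt_asymm hpq]
  have h₁ : (u x.2, u x.1) ≠ (i, j) := by
    rw [← hp, ← hq]
    simpa [Prod.ext_iff, and_comm] using hx
  have h₂ : (u x.2, u x.1) ≠ (j, i) := by
    rw [← hp, ← hq]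
    simpa [Prod.ext_iff, and_comm] using hx'
  simp only [Perm.mul_apply, swap_lt_swap_iff hij h₁ h₂]
  tauto

theorem len_mul_swap_add_one {i j : Fin n} (hij : (j : ℕ) = i + 1) {u : Perm (Fin n)}
    (hu : u j < u i) : len (u * swap i j) + 1 = len u := by
  have hmem : (i, j) ∈ invSet u := mem_invSet.2 ⟨show i < j by rw [Fin.lt_def]; omega, hu⟩
  rw [len_eq_card_invSet, len_eq_card_invSet, invSet_mul_swap hij hu, card_map,
    card_erase_add_one hmem]

theorem len_mul_swap_le {i j : Fin n} (hij : (j : ℕ) = i + 1) (u : Perm (Fin n)) :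
    len (u * swap i j) ≤ len u + 1 := by
  have hne : u i ≠ u j := fun h => by simpa [Fin.ext_iff, hij] using u.injective h
  rcases hne.lt_or_gt with h | h
  · have := len_mul_swap_add_one hij (u := u * swap i j) (by simpa using h)
    rw [mul_swap_mul_self] at this
    omega
  · have := len_mul_swap_add_one hij h
    omega

theorem len_swap_mul_le {i j : Fin n} (hij : (j : ℕ) = i + 1) (u : Perm (Fin n)) :
    len (swap i j * u) ≤ len u + 1 := by
  simpa [len_swap_mul, len_inv] using len_mul_swap_le hij u⁻¹

theorem len_mul_swap_lt {a b : Fin n} (hab : a < b) {u : Perm (Fin n)} (hu : u b < u a) :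
    len (u * swap a b) < len u := by
  obtain ⟨d, hd⟩ : ∃ d, (b : ℕ) = a + d + 1 := ⟨b - a - 1, by rw [Fin.lt_def] at hab; omega⟩
  induction d generalizing b u with
  | zero =>
    have := len_mul_swap_add_one hd hu
    omega
  | succ d ih =>
    let c : Fin n := ⟨a + d + 1, by omega⟩
    have hcb : (b : ℕ) = c + 1 := by simp only [c]; omega
    have hac : a ≠ c := by rw [Ne, Fin.ext_iff]; simp only [c]; omega
    have hab' : a ≠ b := hab.ne
    have hcb' : c ≠ b := by simp [Fin.ext_iff]; omega
    let u₁ := u * swap c b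
    have hu₁ : u * swap a b = u₁ * swap a c * swap c b := by
      rw [swap_comm a b, ← swap_mul_swap_mul_swap hac hab']
      simp only [u₁, mul_assoc]
    have h₁ : len (u₁ * swap a c) < len u₁ :=
      ih (by simp [Fin.lt_def, c]) (by simpa [u₁, swap_apply_of_ne_of_ne hac hab'] using hu) rfl
    rw [hu₁]
    rcases (u.injective.ne hcb').lt_or_gt with h | h
    · have h₀ : len u + 1 = len u₁ := by
        simpa [u₁] using len_mul_swap_add_one hcb (u := u₁) (by simpa [u₁] using h)
      have h₂ := len_mul_swap_add_one hcb (u := u₁ * swap a c) (by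
        simpa [u₁, swap_apply_of_ne_of_ne hac hab', swap_apply_of_ne_of_ne hab'.symm hcb'.symm]
          using h.trans hu)
      omega
    · have h₀ : len u₁ + 1 = len u := len_mul_swap_add_one hcb h
      have h₂ := len_mul_swap_le hcb (u₁ * swap a c)
      omega

theorem len_mul_swap_lt_iff {a b : Fin n} (hab : a < b) (u : Perm (Fin n)) :
    len (u * swap a b) < len u ↔ u b < u a := by
  refine ⟨fun h => ?_, len_mul_swap_lt hab⟩
  by_contra hba
  have hlt : u a < u b := lt_of_le_of_ne (not_lt.1 hba) (u.injective.ne hab.ne)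
  have := len_mul_swap_lt hab (u := u * swap a b) (by simpa using hlt)
  rw [mul_swap_mul_self] at this
  omega

theorem len_swap_mul_lt_iff {a b : Fin n} (hab : a < b) (u : Perm (Fin n)) :
    len (swap a b * u) < len u ↔ u⁻¹ b < u⁻¹ a := by
  rw [len_swap_mul, ← len_inv u, len_mul_swap_lt_iff hab]

end Inversions

section Polynomials

variable {σ K : Type*} [Field K]

def rootProd (S : Finset (σ × σ)) : MvPolynomial σ K := ∏ q ∈ S, (X q.1 - X q.2)

theorem X_sub_X_ne_zero {a b : σ} (hab : a ≠ b) : (X a - X b : MvPolynomial σ K) ≠ 0 :=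
  sub_ne_zero.2 ((X_injective (R := K)).ne hab)

theorem totalDegree_X_sub_X {a b : σ} (hab : a ≠ b) :
    (X a - X b : MvPolynomial σ K).totalDegree = 1 :=
  ((isHomogeneous_X K a).sub (isHomogeneous_X K b)).totalDegree (X_sub_X_ne_zero hab)

theorem irreducible_X_sub_X {a b : σ} (hab : a ≠ b) :
    Irreducible (X a - X b : MvPolynomial σ K) := by
  classical
  refine irreducible_of_totalDegree_eq_one (totalDegree_X_sub_X hab) fun x hx => ?_
  have hcoeff : coeff (Finsupp.single a 1) (X a - X b : MvPolynomial σ K) = 1 := by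
    simp [coeff_X, Finsupp.single_left_inj one_ne_zero, hab.symm]
  exact isUnit_of_dvd_one (hcoeff ▸ hx _)

theorem X_sub_X_not_dvd {a b c d : σ} (hca : c ≠ a) (hcb : c ≠ b) (hcd : c ≠ d) :
    ¬ (X a - X b : MvPolynomial σ K) ∣ X c - X d := by
  classical
  rintro ⟨g, hg⟩
  simpa [Pi.single_apply, hca.symm, hcb.symm, hcd.symm] using
    congrArg (eval (Pi.single c 1)) hg

theorem isRelPrime_X_sub_X [LinearOrder σ] {a b c d : σ} (hab : a < b) (hcd : c < d)
    (hne : (a, b) ≠ (c, d)) : IsRelPrime (X a - X b : MvPolynomial σ K) (X c - X d) := by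
  refine (irreducible_X_sub_X hab.ne).isRelPrime_iff_not_dvd.2 ?_
  by_cases hc : c = a ∨ c = b
  · have hd : d ≠ a ∧ d ≠ b ∧ d ≠ c := by
      rcases hc with rfl | rfl
      · exact ⟨hcd.ne', fun h => hne (by rw [h]), hcd.ne'⟩
      · exact ⟨(hab.trans hcd).ne', hcd.ne', hcd.ne'⟩
    rw [← dvd_neg, neg_sub]
    exact X_sub_X_not_dvd hd.1 hd.2.1 hd.2.2
  · push Not at hc
    exact X_sub_X_not_dvd hc.1 hc.2 hcd.ne

theorem rootProd_dvd [LinearOrder σ] {S : Finset (σ × σ)} (hS : ∀ q ∈ S, q.1 < q.2)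
    {f : MvPolynomial σ K} (hf : ∀ q ∈ S, X q.1 - X q.2 ∣ f) : rootProd S ∣ f :=
  Finset.prod_dvd_of_isRelPrime (fun q hq q' hq' hne =>
    isRelPrime_X_sub_X (hS q hq) (hS q' hq') hne) hf

theorem totalDegree_rootProd {S : Finset (σ × σ)} (hS : ∀ q ∈ S, q.1 ≠ q.2) :
    (rootProd S : MvPolynomial σ K).totalDegree = #S := by
  have hhom := IsHomogeneous.prod S (fun q => (X q.1 - X q.2 : MvPolynomial σ K)) (fun _ => 1)
    (fun q _ => (isHomogeneous_X K q.1).sub (isHomogeneous_X K q.2))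
  simp only [sum_const, smul_eq_mul, mul_one] at hhom
  exact hhom.totalDegree (prod_ne_zero_iff.2 fun q hq => X_sub_X_ne_zero (hS q hq))

theorem rootProd_map_prodCongr (e : σ ≃ σ) (S : Finset (σ × σ)) :
    (rootProd (S.map (e.prodCongr e).toEmbedding) : MvPolynomial σ K) = rename e (rootProd S) := by
  simp [rootProd, map_prod]

theorem totalDegree_lt_of_totalDegree_mul_le {c g : MvPolynomial σ K}
    {m : ℕ} (hc : c.totalDegree = 1) (hg : g ≠ 0) (h : (c * g).totalDegree ≤ m) :
    g.totalDegree < m := by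
  have hc0 : c ≠ 0 := by rintro rfl; simp at hc
  rw [totalDegree_mul_of_isDomain hc0 hg] at h
  omega

end Polynomials

section Canonical

variable {n : ℕ}

theorem filter_len_swap_mul_lt_eq_invSet (w : Perm (Fin n)) :
    univ.filter (fun q : Fin n × Fin n => q.1 < q.2 ∧ len (swap q.1 q.2 * w) < len w) =
      invSet w⁻¹ := by
  ext q
  simp only [mem_filter, mem_univ, true_and, mem_invSet]
  exact and_congr_right fun h => len_swap_mul_lt_iff h w

theorem bruhatLE.eq_or_len_lt {u v : Perm (Fin n)} (h : bruhatLE u v) : u = v ∨ len u < len v := by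
  induction h with
  | refl => exact Or.inl rfl
  | tail _ huv ih => exact Or.inr (ih.elim (· ▸ huv.2) (·.trans huv.2))

theorem IsCanonical.apply_self {w : Perm (Fin n)} {p : Perm (Fin n) → Pol n}
    (hp : IsCanonical w p) : p w = rootProd (invSet w⁻¹) := by
  rw [hp.2.2.2, filter_len_swap_mul_lt_eq_invSet, rootProd]

theorem IsCanonical.apply_eq_zero {w v : Perm (Fin n)} {p : Perm (Fin n) → Pol n}
    (hp : IsCanonical w p) (hlen : len v ≤ len w) (hne : v ≠ w) : p v = 0 :=
  hp.2.2.1 v fun h => (h.eq_or_len_lt).elim (fun h => hne h.symm) (by omega)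

theorem IsCanonical.isHomogeneous {w : Perm (Fin n)} {p : Perm (Fin n) → Pol n}
    (hp : IsCanonical w p) (v : Perm (Fin n)) : (p v).IsHomogeneous (len w) :=
  hp.2.1 v

theorem IsCanonical.totalDegree_le {w : Perm (Fin n)} {p : Perm (Fin n) → Pol n}
    (hp : IsCanonical w p) (v : Perm (Fin n)) : (p v).totalDegree ≤ len w :=
  (hp.isHomogeneous v).totalDegree_le

theorem GKM.eq_zero_of_forall_len_lt {q : Perm (Fin n) → Pol n} (hq : GKM n q) {d : ℕ}
    (hdeg : ∀ v, q v ≠ 0 → (q v).totalDegree < d) (hlow : ∀ v, len v < d → q v = 0) :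
    q = 0 := by
  funext v
  induction hm : len v using Nat.strong_induction_on generalizing v with
  | _ m ih =>
    by_cases hv : len v < d
    · exact hlow v hv
    have hdvd : rootProd (invSet v⁻¹) ∣ q v := by
      refine rootProd_dvd (fun x hx => (mem_invSet.1 hx).1) fun x hx => ?_
      obtain ⟨hx₁, hx₂⟩ := mem_invSet.1 hx
      have hlt := (len_swap_mul_lt_iff hx₁ v).2 hx₂
      simpa [ih _ (hm ▸ hlt) _ rfl] using hq v x.1 x.2 hx₁
    by_contra h0
    have hle := totalDegree_le_of_dvd_of_isDomain hdvd h0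
    rw [totalDegree_rootProd fun x hx => (mem_invSet.1 hx).1.ne, ← len_eq_card_invSet,
      len_inv] at hle
    have := hdeg v h0
    omega

theorem GKM.eq_of_forall_len_lt {w u : Perm (Fin n)} {p D : Perm (Fin n) → Pol n}
    (hp : IsCanonical u p) (hD : GKM n D) (hu : len u + 1 = len w)
    (hdeg : ∀ v, D v ≠ 0 → (D v).totalDegree < len w)
    (hlow : ∀ v, len v < len w → v ≠ u → D v = 0) (hval : D u = p u) : D = p := by
  refine sub_eq_zero.1 (((gkmSubmodule n).sub_mem hD hp.1).eq_zero_of_forall_len_lt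
    (d := len w) (fun v _ => ?_) fun v hv => ?_)
  · refine (totalDegree_sub _ _).trans_lt (max_lt ?_ ((hp.totalDegree_le v).trans_lt (by omega)))
    rcases eq_or_ne (D v) 0 with h | h
    · simp only [h, totalDegree_zero]; omega
    · exact hdeg v h
  · by_cases hvu : v = u
    · simp [hvu, hval]
    · simp [hlow v hv hvu, hp.apply_eq_zero (by omega) hvu]

end Canonical

section DividedDifferences

variable {n : ℕ} {i j : Fin n}

theorem rename_swap_rootProd_invSet (hij : (j : ℕ) = i + 1) {u : Perm (Fin n)}
    (hu : u j < u i) :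
    rename (swap i j) (rootProd (invSet u) : Pol n) =
      -((X i - X j) * rootProd (invSet (u * swap i j))) := by
  have hmem : (i, j) ∈ invSet u := mem_invSet.2 ⟨show i < j by rw [Fin.lt_def]; omega, hu⟩
  rw [rootProd, ← mul_prod_erase _ _ hmem, map_mul, ← rootProd, invSet_mul_swap hij hu,
    rootProd_map_prodCongr]
  simp only [map_sub, rename_X, swap_apply_left, swap_apply_right]
  ring

theorem rootProd_invSet_swap_mul (hij : (j : ℕ) = i + 1) {u : Perm (Fin n)} {p q : Fin n}
    (hp : u p = j) (hq : u q = i) (hpq : p < q) :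
    (rootProd (invSet u) : Pol n) = (X p - X q) * rootProd (invSet (swap i j * u)) := by
  have hmem : (p, q) ∈ invSet u := mem_invSet.2 ⟨hpq, by rw [hp, hq, Fin.lt_def]; omega⟩
  rw [invSet_swap_mul hij hp hq hpq]
  unfold rootProd
  rw [mul_prod_erase (invSet u) (fun x => (X x.1 - X x.2 : Pol n)) hmem]

variable {p p' D : Perm (Fin n) → Pol n} {w : Perm (Fin n)}

theorem totalDegree_leftDivDiff_lt (hp : IsCanonical w p) (hij : i ≠ j)
    (hD : ∀ v, p v - pact (swap i j) (p (swap i j * v)) = (X i - X j) * D v)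
    (v : Perm (Fin n)) (hv : D v ≠ 0) : (D v).totalDegree < len w :=
  totalDegree_lt_of_totalDegree_mul_le (totalDegree_X_sub_X hij) hv
    (hD v ▸ ((hp.isHomogeneous v).sub (hp.isHomogeneous _).rename_isHomogeneous).totalDegree_le)

theorem leftDivDiff_apply_eq_zero (hp : IsCanonical w p) (hij : (j : ℕ) = i + 1)
    (hD : ∀ v, p v - pact (swap i j) (p (swap i j * v)) = (X i - X j) * D v)
    {v : Perm (Fin n)} (hv : len v < len w) (hne : v ≠ swap i j * w) : D v = 0 := by
  have h₁ : p v = 0 := hp.apply_eq_zero hv.le (by rintro rfl; omega)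
  have h₂ : p (swap i j * v) = 0 :=
    hp.apply_eq_zero (by have := len_swap_mul_le hij v; omega)
      (fun h => hne (by rw [← h, swap_mul_self_mul]))
  have h := hD v
  rw [h₁, h₂, pact, map_zero, sub_zero, zero_eq_mul] at h
  exact h.resolve_left (X_sub_X_ne_zero (by simp [Fin.ext_iff, hij]))

theorem leftDivDiff_apply_swap_mul (hp : IsCanonical w p) (hp' : IsCanonical (swap i j * w) p')
    (hij : (j : ℕ) = i + 1)
    (hD : ∀ v, p v - pact (swap i j) (p (swap i j * v)) = (X i - X j) * D v)
    (hlt : len (swap i j * w) < len w) : D (swap i j * w) = p' (swap i j * w) := by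
  have hw : w⁻¹ j < w⁻¹ i := (len_swap_mul_lt_iff (by rw [Fin.lt_def]; omega) w).1 hlt
  have h := hD (swap i j * w)
  rw [swap_mul_self_mul, hp.apply_eq_zero hlt.le (by rintro h; rw [h] at hlt; omega),
    hp.apply_self, pact, rename_swap_rootProd_invSet hij hw, sub_neg_eq_add, zero_add,
    show w⁻¹ * swap i j = (swap i j * w)⁻¹ by rw [mul_inv_rev, swap_inv], ← hp'.apply_self] at h
  exact (mul_left_cancel₀ (X_sub_X_ne_zero (by simp [Fin.ext_iff, hij])) h).symm

theorem leftDivDiff_eq (hp : IsCanonical w p) (hp' : IsCanonical (swap i j * w) p')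
    (hij : (j : ℕ) = i + 1) (hgkm : GKM n D)
    (hD : ∀ v, p v - pact (swap i j) (p (swap i j * v)) = (X i - X j) * D v) :
    (len (swap i j * w) < len w → D = p') ∧ (¬ len (swap i j * w) < len w → D = 0) := by
  have hdeg := totalDegree_leftDivDiff_lt hp (by simp [Fin.ext_iff, hij]) hD
  constructor
  · intro hlt
    have hlen : len (swap i j * w) + 1 = len w := by
      have := len_swap_mul_le hij (swap i j * w)
      rw [swap_mul_self_mul] at this
      omega
    exact hgkm.eq_of_forall_len_lt hp' hlen hdeg
      (fun v hv => leftDivDiff_apply_eq_zero hp hij hD hv)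
      (leftDivDiff_apply_swap_mul hp hp' hij hD hlt)
  · intro hge
    exact hgkm.eq_zero_of_forall_len_lt hdeg
      fun v hv => leftDivDiff_apply_eq_zero hp hij hD hv (by rintro rfl; omega)

theorem totalDegree_rightDivDiff_lt (hp : IsCanonical w p) (hij : i ≠ j)
    (hD : ∀ v, p v - p (v * swap i j) = (X (v j) - X (v i)) * D v)
    (v : Perm (Fin n)) (hv : D v ≠ 0) : (D v).totalDegree < len w :=
  totalDegree_lt_of_totalDegree_mul_le (totalDegree_X_sub_X (v.injective.ne hij.symm)) hv
    (hD v ▸ ((hp.isHomogeneous v).sub (hp.isHomogeneous _)).totalDegree_le)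

theorem rightDivDiff_apply_eq_zero (hp : IsCanonical w p) (hij : (j : ℕ) = i + 1)
    (hD : ∀ v, p v - p (v * swap i j) = (X (v j) - X (v i)) * D v)
    {v : Perm (Fin n)} (hv : len v < len w) (hne : v ≠ w * swap i j) : D v = 0 := by
  have h₁ : p v = 0 := hp.apply_eq_zero hv.le (by rintro rfl; omega)
  have h₂ : p (v * swap i j) = 0 :=
    hp.apply_eq_zero (by have := len_mul_swap_le hij v; omega)
      (fun h => hne (by rw [← h, mul_swap_mul_self]))
  have h := hD v
  rw [h₁, h₂, sub_zero, zero_eq_mul] at h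
  exact h.resolve_left (X_sub_X_ne_zero (v.injective.ne (by simp [Fin.ext_iff, hij])))

theorem rightDivDiff_apply_mul_swap (hp : IsCanonical w p) (hp' : IsCanonical (w * swap i j) p')
    (hij : (j : ℕ) = i + 1)
    (hD : ∀ v, p v - p (v * swap i j) = (X (v j) - X (v i)) * D v)
    (hlt : len (w * swap i j) < len w) : D (w * swap i j) = p' (w * swap i j) := by
  have hw : w j < w i := (len_mul_swap_lt_iff (by rw [Fin.lt_def]; omega) w).1 hlt
  have h := hD (w * swap i j)
  rw [mul_swap_mul_self, hp.apply_eq_zero hlt.le (by rintro h; rw [h] at hlt; omega),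
    hp.apply_self, rootProd_invSet_swap_mul hij (by simp) (by simp) hw,
    show swap i j * w⁻¹ = (w * swap i j)⁻¹ by rw [mul_inv_rev, swap_inv], ← hp'.apply_self] at h
  simp only [Perm.mul_apply, swap_apply_left, swap_apply_right] at h
  refine mul_left_cancel₀ (X_sub_X_ne_zero (w.injective.ne ?_)) (h.symm.trans (by ring))
  simp [Fin.ext_iff, hij]

theorem rightDivDiff_eq (hp : IsCanonical w p) (hp' : IsCanonical (w * swap i j) p')
    (hij : (j : ℕ) = i + 1) (hgkm : GKM n D)
    (hD : ∀ v, p v - p (v * swap i j) = (X (v j) - X (v i)) * D v) :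
    (len (w * swap i j) < len w → D = p') ∧ (¬ len (w * swap i j) < len w → D = 0) := by
  have hdeg := totalDegree_rightDivDiff_lt hp (by simp [Fin.ext_iff, hij]) hD
  constructor
  · intro hlt
    have hlen : len (w * swap i j) + 1 = len w := by
      have := len_mul_swap_le hij (w * swap i j)
      rw [mul_swap_mul_self] at this
      omega
    exact hgkm.eq_of_forall_len_lt hp' hlen hdeg
      (fun v hv => rightDivDiff_apply_eq_zero hp hij hD hv)
      (rightDivDiff_apply_mul_swap hp hp' hij hD hlt)
  · intro hge
    exact hgkm.eq_zero_of_forall_len_lt hdeg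
      fun v hv => rightDivDiff_apply_eq_zero hp hij hD hv (by rintro rfl; omega)

end DividedDifferences

/-- `Dl i` and `Dr i` stand for `δᵢ` and `∂ᵢ`, given by their componentwise defining
equations. -/
theorem divided_difference_on_schubert_class (n : ℕ)
    (pw : Perm (Fin n) → Perm (Fin n) → Pol n)
    (hpw : ∀ w, IsCanonical w (pw w))
    (Dl Dr : ∀ i : ℕ, i + 1 < n → (Perm (Fin n) → Pol n) → (Perm (Fin n) → Pol n))
    (hDl : ∀ (i : ℕ) (hi : i + 1 < n) (p), GKM n p → GKM n (Dl i hi p) ∧ ∀ v,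
        p v - pact (sT n i hi) (p (sT n i hi * v))
          = (X ⟨i, by omega⟩ - X ⟨i + 1, hi⟩ : Pol n) * Dl i hi p v)
    (hDr : ∀ (i : ℕ) (hi : i + 1 < n) (p), GKM n p → GKM n (Dr i hi p) ∧ ∀ v,
        p v - p (v * sT n i hi)
          = (X (v ⟨i + 1, hi⟩) - X (v ⟨i, by omega⟩) : Pol n) * Dr i hi p v)
    (w : Perm (Fin n)) (i : ℕ) (hi : i + 1 < n) :
    (len (sT n i hi * w) < len w → Dl i hi (pw w) = pw (sT n i hi * w)) ∧
    (¬ len (sT n i hi * w) < len w → Dl i hi (pw w) = 0) ∧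
    (len (w * sT n i hi) < len w → Dr i hi (pw w) = pw (w * sT n i hi)) ∧
    (¬ len (w * sT n i hi) < len w → Dr i hi (pw w) = 0) := by
  have hij : ((⟨i + 1, hi⟩ : Fin n) : ℕ) = (⟨i, by omega⟩ : Fin n) + 1 := rfl
  obtain ⟨hGl, hEl⟩ := hDl i hi (pw w) (hpw w).1
  obtain ⟨hGr, hEr⟩ := hDr i hi (pw w) (hpw w).1
  obtain ⟨hl₁, hl₂⟩ := leftDivDiff_eq (hpw w) (hpw _) hij hGl hEl
  obtain ⟨hr₁, hr₂⟩ := rightDivDiff_eq (hpw w) (hpw _) hij hGr hEr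
  exact ⟨hl₁, hl₂, hr₁, hr₂⟩
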